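/- Let R be a locally unital algebra with a system of mutually orthogonal idempotents {1_X : X ∈ I}, so R = ⊕_{X,Y} 1_Y R 1_X. Set R_diag = ⊕_X 1_X R 1_X and [R,R]_diag = ∑_{X,Y} [1_X R 1_Y, 1_Y R 1_X]. Then the inclusion R_diag ↪ R induces a linear isomorphism R_diag/[R,R]_diag ≅ R/[R,R]. -/

import Mathlib

/-!
Split `R = A ⊕ B` into the diagonal part `A = ⊕_X 1_X R 1_X` and the off-diagonal part
`B = ⊕_{X ≠ Y} 1_X R 1_Y`. An off-diagonal `x ∈ 1_X R 1_Y` is the commutator `1_X x - x 1_X`,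
so `B ⊆ [R,R]`; and by bilinearity `[R,R]` is spanned by commutators of homogeneous elements,
each of which lies in `[R,R]_diag` or in `B`. Hence `[R,R] = [R,R]_diag ⊕ B` with
`[R,R]_diag ⊆ A`, so `R/[R,R] = (A ⊕ B)/([R,R]_diag ⊕ B) ≅ A/[R,R]_diag`.
-/

open Submodule

theorem Submodule.exists_quotient_equiv_sup_of_isCompl {R M : Type*} [Ring R] [AddCommGroup M]
    [Module R M] {A B U : Submodule R M} (hAB : IsCompl A B) (hUA : U ≤ A) :
    ∃ φ : (A ⧸ U.comap A.subtype) ≃ₗ[R] (M ⧸ (U ⊔ B)),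
      ∀ x : A, φ (Quotient.mk x) = Quotient.mk (x : M) := by
  let g := mapQ (U.comap A.subtype) (U ⊔ B) A.subtype (comap_mono le_sup_left)
  have hg : ∀ x : A, g (Quotient.mk x) = Quotient.mk (x : M) := fun _ => rfl
  refine ⟨LinearEquiv.ofBijective g ⟨?_, ?_⟩, hg⟩
  · rw [← LinearMap.ker_eq_bot, LinearMap.ker_eq_bot']
    intro q hq
    obtain ⟨x, rfl⟩ := Quotient.mk_surjective _ q
    rw [hg, Quotient.mk_eq_zero, mem_sup] at hq
    obtain ⟨u, hu, b, hb, hub⟩ := hq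
    have hbA : b ∈ A := by
      rw [eq_sub_of_add_eq' hub]
      exact sub_mem x.2 (hUA hu)
    have hb0 : b = 0 := (disjoint_def.1 hAB.disjoint) b hbA hb
    rw [Quotient.mk_eq_zero, mem_comap, subtype_apply, ← hub, hb0, add_zero]
    exact hu
  · intro q
    obtain ⟨m, rfl⟩ := Quotient.mk_surjective _ q
    obtain ⟨a, ha, b, hb, rfl⟩ := mem_sup.1 (hAB.sup_eq_top ▸ mem_top : m ∈ A ⊔ B)
    refine ⟨Quotient.mk ⟨a, ha⟩, (Quotient.eq _).2 ?_⟩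
    simpa using mem_sup_right (neg_mem hb)

theorem DirectSum.IsInternal.isCompl_biSup {R M ι : Type*} [Ring R] [AddCommGroup M] [Module R M]
    [DecidableEq ι] {A : ι → Submodule R M} (h : DirectSum.IsInternal A) (P : ι → Prop) :
    IsCompl (⨆ (i) (_ : P i), A i) (⨆ (i) (_ : ¬P i), A i) :=
  ⟨h.submodule_iSupIndep.disjoint_biSup_biSup (s := {i | P i}) (t := {i | ¬P i})
      (Set.disjoint_left.2 fun _ hP hnP => hnP hP),
    codisjoint_iff.2 (by rw [← iSup_split, h.submodule_iSup_eq_top])⟩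

theorem LinearMap.apply_mem_of_iSup_eq_top {R M N P ι κ : Type*} [CommSemiring R]
    [AddCommMonoid M] [AddCommMonoid N] [AddCommMonoid P] [Module R M] [Module R N] [Module R P]
    (f : M →ₗ[R] N →ₗ[R] P) {s : ι → Submodule R M} {t : κ → Submodule R N}
    (hs : iSup s = ⊤) (ht : iSup t = ⊤) {V : Submodule R P}
    (h : ∀ i j, ∀ m ∈ s i, ∀ n ∈ t j, f m n ∈ V) (m : M) (n : N) : f m n ∈ V := by
  have hle : map₂ f ⊤ ⊤ ≤ V := by
    rw [← hs, ← ht, map₂_iSup_left]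
    refine iSup_le fun i => ?_
    rw [map₂_iSup_right]
    exact iSup_le fun j => map₂_le.2 (h i j)
  exact hle (apply_mem_map₂ f mem_top mem_top)

section Corner

variable (k : Type*) {R : Type*} [CommRing k] [NonUnitalRing R] [Module k R]
  [SMulCommClass k R R] [IsScalarTower k R R]

def corner (p q : R) : Submodule k R :=
  LinearMap.range ((LinearMap.mulLeft k p).comp (LinearMap.mulRight k q))

variable {k} {p q r : R} {x y : R}

theorem mem_corner_of_mul_eq (hpx : p * x = x) (hxq : x * q = x) : x ∈ corner k p q :=
  ⟨x, by simp [hxq, hpx]⟩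

theorem left_mul_eq_self_of_mem_corner (hp : IsIdempotentElem p) (hx : x ∈ corner k p q) :
    p * x = x := by
  obtain ⟨r, rfl⟩ := hx
  simp [← mul_assoc, hp.eq]

theorem mul_right_eq_self_of_mem_corner (hq : IsIdempotentElem q) (hx : x ∈ corner k p q) :
    x * q = x := by
  obtain ⟨r, rfl⟩ := hx
  simp [mul_assoc, hq.eq]

theorem mul_mem_corner (hp : IsIdempotentElem p) (hr : IsIdempotentElem r)
    (hx : x ∈ corner k p q) (hy : y ∈ corner k q r) : x * y ∈ corner k p r :=
  mem_corner_of_mul_eq (by rw [← mul_assoc, left_mul_eq_self_of_mem_corner hp hx])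
    (by rw [mul_assoc, mul_right_eq_self_of_mem_corner hr hy])

theorem mul_eq_zero_of_mem_corner {q' : R} (hq : IsIdempotentElem q) (hq' : IsIdempotentElem q')
    (h : q * q' = 0) (hx : x ∈ corner k p q) (hy : y ∈ corner k q' r) : x * y = 0 := by
  rw [← mul_right_eq_self_of_mem_corner hq hx, ← left_mul_eq_self_of_mem_corner hq' hy,
    mul_assoc, ← mul_assoc q, h, zero_mul, mul_zero]

theorem eq_commutator_of_mem_corner (hp : IsIdempotentElem p) (hq : IsIdempotentElem q)
    (hqp : q * p = 0) (hx : x ∈ corner k p q) : x = p * x - x * p := by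
  rw [left_mul_eq_self_of_mem_corner hp hx, ← mul_right_eq_self_of_mem_corner hq hx, mul_assoc,
    hqp, mul_zero, sub_zero, mul_right_eq_self_of_mem_corner hq hx]

end Corner

section CornerDecomposition

variable (k : Type*) {R I : Type*} [CommRing k] [NonUnitalRing R] [Module k R]
  [SMulCommClass k R R] [IsScalarTower k R R] (e : I → R)

def diagonalCorners : Submodule k R := ⨆ X, corner k (e X) (e X)

def offDiagonalCorners : Submodule k R :=
  ⨆ (i : I × I) (_ : i.1 ≠ i.2), corner k (e i.1) (e i.2)

def diagonalCommutatorSpan : Submodule k R :=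
  span k {x | ∃ (X Y : I) (a b : R),
    a ∈ corner k (e X) (e Y) ∧ b ∈ corner k (e Y) (e X) ∧ x = a * b - b * a}

variable (R) in
def commutatorSpan : Submodule k R := span k {x | ∃ a b : R, x = a * b - b * a}

variable {k e}

theorem diagonalCorners_eq_biSup :
    diagonalCorners k e = ⨆ (i : I × I) (_ : i.1 = i.2), corner k (e i.1) (e i.2) :=
  le_antisymm (iSup_le fun X => le_iSup₂_of_le (X, X) rfl le_rfl) <| by
    refine iSup₂_le ?_
    rintro ⟨X, Y⟩ (rfl : X = Y)
    exact le_iSup (fun X => corner k (e X) (e X)) X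

theorem isCompl_diagonalCorners_offDiagonalCorners [DecidableEq I]
    (h : DirectSum.IsInternal fun i : I × I => corner k (e i.1) (e i.2)) :
    IsCompl (diagonalCorners k e) (offDiagonalCorners k e) := by
  rw [diagonalCorners_eq_biSup]
  exact h.isCompl_biSup _

variable (he : ∀ X, IsIdempotentElem (e X))
include he

theorem diagonalCommutatorSpan_le_diagonalCorners :
    diagonalCommutatorSpan k e ≤ diagonalCorners k e := by
  refine span_le.2 ?_
  rintro _ ⟨X, Y, a, b, ha, hb, rfl⟩
  exact sub_mem (mem_iSup_of_mem X (mul_mem_corner (he X) (he X) ha hb))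
    (mem_iSup_of_mem Y (mul_mem_corner (he Y) (he Y) hb ha))

variable (horth : Pairwise (e · * e · = 0))
include horth

theorem offDiagonalCorners_le_commutatorSpan : offDiagonalCorners k e ≤ commutatorSpan k R := by
  refine iSup₂_le fun i hi x hx => subset_span ⟨e i.1, x, ?_⟩
  exact eq_commutator_of_mem_corner (he _) (he _) (horth hi.symm) hx

theorem mul_mem_offDiagonalCorners {X Y Z W : I} {a b : R} (h : ¬(Y = Z ∧ X = W))
    (ha : a ∈ corner k (e X) (e Y)) (hb : b ∈ corner k (e Z) (e W)) :
    a * b ∈ offDiagonalCorners k e := by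
  by_cases hYZ : Y = Z
  · subst hYZ
    have hXW : X ≠ W := fun hXW => h ⟨rfl, hXW⟩
    exact mem_iSup_of_mem (X, W) (mem_iSup_of_mem hXW (mul_mem_corner (he X) (he W) ha hb))
  · rw [mul_eq_zero_of_mem_corner (he Y) (he Z) (horth hYZ) ha hb]
    exact zero_mem _

theorem commutator_mem_of_mem_corner {X Y Z W : I} {a b : R}
    (ha : a ∈ corner k (e X) (e Y)) (hb : b ∈ corner k (e Z) (e W)) :
    a * b - b * a ∈ diagonalCommutatorSpan k e ⊔ offDiagonalCorners k e := by
  by_cases h : Y = Z ∧ X = W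
  · obtain ⟨rfl, rfl⟩ := h
    exact mem_sup_left (subset_span ⟨X, Y, a, b, ha, hb, rfl⟩)
  · have h' : ¬(W = X ∧ Z = Y) := fun h' => h ⟨h'.2.symm, h'.1.symm⟩
    exact mem_sup_right (sub_mem (mul_mem_offDiagonalCorners he horth h ha hb)
      (mul_mem_offDiagonalCorners he horth h' hb ha))

theorem commutatorSpan_eq_sup (htop : ⨆ i : I × I, corner k (e i.1) (e i.2) = ⊤) :
    commutatorSpan k R = diagonalCommutatorSpan k e ⊔ offDiagonalCorners k e := by
  refine le_antisymm (span_le.2 ?_) (sup_le ?_ (offDiagonalCorners_le_commutatorSpan he horth))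
  · rintro _ ⟨a, b, rfl⟩
    exact (LinearMap.mul k R - (LinearMap.mul k R).flip).apply_mem_of_iSup_eq_top htop htop
      (fun i j a ha b hb => commutator_mem_of_mem_corner he horth ha hb) a b
  · exact span_mono fun _ ⟨_, _, a, b, _, _, hx⟩ => ⟨a, b, hx⟩

end CornerDecomposition

/-- For a locally unital algebra `R` with mutually orthogonal idempotents `{1_X}` such that
`R = ⊕_{X,Y} 1_X R 1_Y`, the inclusion `R_diag ↪ R` induces a linear isomorphism
`R_diag/[R,R]_diag ≅ R/[R,R]`. -/
theorem stmt15 {k R I : Type*} [Field k] [NonUnitalRing R]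
    [Module k R] [SMulCommClass k R R] [IsScalarTower k R R] [DecidableEq I]
    (e : I → R)
    (horth : ∀ X Y : I, e X * e Y = if X = Y then e X else 0)
    (S : I → I → Submodule k R)
    (hS : ∀ X Y, S X Y = LinearMap.range
      ((LinearMap.mulLeft k (e X)).comp (LinearMap.mulRight k (e Y))))
    (hdecomp : DirectSum.IsInternal (fun p : I × I => S p.1 p.2))
    (Rdiag : Submodule k R) (hRdiag : Rdiag = ⨆ X : I, S X X)
    (T : Submodule k R)
    (hT : T = Submodule.span k {x : R | ∃ a b : R, x = a * b - b * a})
    (Tdiag : Submodule k R)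
    (hTdiag : Tdiag = Submodule.span k
      {x : R | ∃ (X Y : I) (a b : R), a ∈ S X Y ∧ b ∈ S Y X ∧ x = a * b - b * a}) :
    ∃ φ : (↥Rdiag ⧸ Tdiag.comap Rdiag.subtype) ≃ₗ[k] (R ⧸ T),
      ∀ x : Rdiag, φ (Submodule.Quotient.mk x) = Submodule.Quotient.mk (x : R) := by
  obtain rfl : S = fun X Y => corner k (e X) (e Y) := funext fun X => funext (hS X)
  subst hRdiag hT hTdiag
  have he : ∀ X, IsIdempotentElem (e X) := fun X => (horth X X).trans (if_pos rfl)
  have horth' : Pairwise (e · * e · = 0) := fun X Y hXY => by simpa [hXY] using horth X Y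
  have hquot := exists_quotient_equiv_sup_of_isCompl
    (isCompl_diagonalCorners_offDiagonalCorners hdecomp)
    (diagonalCommutatorSpan_le_diagonalCorners he)
  rwa [← commutatorSpan_eq_sup he horth' hdecomp.submodule_iSup_eq_top] at hquot
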